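/- If G is a densely ordered abelian group that is dense in its divisible hull, then G has no proper nontrivial convex subgroup definable (with parameters) in the language of ordered groups. -/

import Mathlib

open FirstOrder

/-- The language of ordered groups: a constant `0`, a binary function `+`, a binary
relation `<`. -/
def Log : FirstOrder.Language where
  Functions := fun n => match n with
    | 0 => Unit
    | 2 => Unit
    | _ => Empty
  Relations := fun n => match n with
    | 2 => Unit
    | _ => Empty

/-- The canonical `Log`-structure on an ordered abelian group. -/
instance logStructure (G : Type*) [AddCommGroup G] [LinearOrder G] [IsOrderedAddMonoid G] : Log.Structure G where
  funMap {n} f := match n, f with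
    | 0, _ => fun _ => (0 : G)
    | 2, _ => fun v => v 0 + v 1
  RelMap {n} r := match n, r with
    | 2, _ => fun v => v 0 < v 1

/-!
Definable sets are semilinear: finite unions of sets cut out by finitely many linear conditions
`φ x < 0`, `φ x = 0` (integer coefficients, constants from `G`) and a set that is periodic modulo
some `N • G`. These sets form a Boolean algebra containing the atomic formulas, and they are
closed under projection by Fourier–Motzkin elimination: an equation involving the eliminated
variable is solved by substitution, its congruence condition being absorbed into the periodic
part; otherwise the strict bounds on the variable are pairwise compatible in the divisible hull,
and since `G` is dense in its divisible hull they have a common solution in every coset of `N • G`.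

A proper nontrivial convex subgroup `H` determines a gap of `G` that no element `e / a` of the
divisible hull fills. Near this gap every one-variable linear condition is constant, so every
definable subset of `G` agrees near the gap with a periodic set. For `H` this is impossible: `H`
contains elements just below the gap, and periodicity then puts elements of `H` just above it.
-/

/-- The intrinsic form of density of `G` in its divisible hull. -/
def ZSMulDense (G : Type*) [AddCommGroup G] [LinearOrder G] : Prop :=
  ∀ n : ℤ, n ≠ 0 → ∀ a b : G, a < b → ∃ h : G, a < n • h ∧ n • h < b

section ZSMulDense

variable {G : Type*} [AddCommGroup G] [LinearOrder G]

theorem zsmulDense_of_strictMono {D : Type*} [AddCommGroup D] [LinearOrder D]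
    [IsOrderedAddMonoid D] (f : G →+ D) (hf : StrictMono f)
    (hdiv : ∀ (d : D) (n : ℕ), 0 < n → ∃ e : D, n • e = d)
    (hdense : ∀ a b : D, a < b → ∃ g : G, a < f g ∧ f g < b) : ZSMulDense G := by
  intro n hn a b hab
  wlog hpos : 0 < n generalizing n
  · obtain ⟨h, h₁, h₂⟩ := this (-n) (neg_ne_zero.2 hn) (by omega)
    exact ⟨-h, by simpa using h₁, by simpa using h₂⟩
  lift n to ℕ using hpos.le
  obtain ⟨e₁, he₁⟩ := hdiv (f a) n (by omega)
  obtain ⟨e₂, he₂⟩ := hdiv (f b) n (by omega)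
  have he : e₁ < e₂ := lt_of_nsmul_lt_nsmul_right n (he₁ ▸ he₂ ▸ hf hab)
  obtain ⟨h, h₁, h₂⟩ := hdense e₁ e₂ he
  have hn : n ≠ 0 := by omega
  refine ⟨h, ?_, ?_⟩ <;> rw [← hf.lt_iff_lt, natCast_zsmul, map_nsmul]
  · exact he₁ ▸ nsmul_lt_nsmul_right hn h₁
  · exact he₂ ▸ nsmul_lt_nsmul_right hn h₂

variable [IsOrderedAddMonoid G] (hG : ZSMulDense G)
include hG

theorem ZSMulDense.exists_add_smul_lt_zero [Nontrivial G] {N : ℕ} (hN : 0 < N) (g₀ r : G)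
    {a : ℤ} (ha : a ≠ 0) : ∃ h : G, r + a • (g₀ + N • h) < 0 := by
  obtain ⟨c, hc⟩ := exists_zero_lt (α := G)
  obtain ⟨h, -, hh⟩ := hG (a * N) (by positivity) (-r - a • g₀ - c) (-r - a • g₀)
    (sub_lt_self _ hc)
  refine ⟨h, ?_⟩
  have : r + a • (g₀ + N • h) = (a * N) • h - (-r - a • g₀) := by module
  rw [this]
  exact sub_neg.2 hh

/-- For `a > 0 > b` the conditions `r + a • g < 0` and `s + b • g < 0` bound `g` from above and
from below; `a • s - b • r < 0` says that the bounds are compatible in the divisible hull. -/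
theorem ZSMulDense.exists_add_smul_lt_zero_and {N : ℕ} (hN : 0 < N) (g₀ : G) {r s : G}
    {a b : ℤ} (ha : 0 < a) (hb : b < 0) (hrs : a • s - b • r < 0) :
    ∃ h : G, r + a • (g₀ + N • h) < 0 ∧ s + b • (g₀ + N • h) < 0 := by
  have hb' : 0 < -b := neg_pos.2 hb
  obtain ⟨h, h₁, h₂⟩ := hG (a * -b * N) (by positivity) (a • s - (a * -b) • g₀)
    (b • r - (a * -b) • g₀) (sub_lt_sub_right (sub_neg.1 hrs) _)
  set t := g₀ + N • h
  have ht : (a * -b) • t = (a * -b) • g₀ + (a * -b * N) • h := by module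
  refine ⟨h, ?_, ?_⟩
  · have key : -b • (a • t) < -b • -r := by
      rw [show -b • (a • t) = (a * -b) • t by module, show -b • -r = b • r by module, ht]
      exact lt_sub_iff_add_lt'.1 h₂
    exact lt_neg_iff_add_neg'.1 ((zsmul_lt_zsmul_iff_right hb').1 key)
  · have key : a • s < a • (-b • t) := by
      rw [show a • (-b • t) = (a * -b) • t by module, ht]
      exact sub_lt_iff_lt_add'.1 h₁
    rw [zsmul_lt_zsmul_iff_right ha, neg_smul] at key
    exact lt_neg_iff_add_neg.1 key

end ZSMulDense

section AffineForm

variable {G : Type*} [AddCommGroup G] {α : Type*} [Fintype α] {n : ℕ}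

def affineEval (x : α → G) : (α → ℤ) × G →ₗ[ℤ] G :=
  (Fintype.linearCombination ℤ x).coprod LinearMap.id

theorem affineEval_apply (x : α → G) (φ : (α → ℤ) × G) :
    affineEval x φ = ∑ i, φ.1 i • x i + φ.2 := by
  simp [affineEval, Fintype.linearCombination_apply]

theorem affineEval_add_nsmul (x z : α → G) (N : ℕ) (φ : (α → ℤ) × G) :
    affineEval (x + N • z) φ = affineEval x φ + N • affineEval z (φ.1, 0) := by
  simp only [affineEval_apply, Pi.add_apply, Pi.smul_apply, smul_add, Finset.sum_add_distrib,
    Finset.smul_sum, smul_comm (N : ℕ) (φ.1 _), add_zero]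
  abel

def initForm (φ : (Fin (n + 1) → ℤ) × G) : (Fin n → ℤ) × G := (Fin.init φ.1, φ.2)

def tailForm (φ : (Fin (n + 1) → ℤ) × G) : (Fin n → ℤ) × G := (Fin.tail φ.1, φ.2)

theorem affineEval_snoc (y : Fin n → G) (g : G) (φ : (Fin (n + 1) → ℤ) × G) :
    affineEval (Fin.snoc y g : Fin (n + 1) → G) φ =
      affineEval y (initForm φ) + φ.1 (Fin.last n) • g := by
  simp only [affineEval_apply, Fin.sum_univ_castSucc, Fin.snoc_castSucc, Fin.snoc_last,
    initForm, Fin.init]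
  abel

theorem affineEval_cons (g : G) (p : Fin n → G) (φ : (Fin (n + 1) → ℤ) × G) :
    affineEval (Fin.cons g p : Fin (n + 1) → G) φ = φ.1 0 • g + affineEval p (tailForm φ) := by
  simp only [affineEval_apply, Fin.sum_univ_succ, Fin.cons_zero, Fin.cons_succ, tailForm,
    Fin.tail]
  abel

/-- The combination of `ψ` and `φ` in which the last variable cancels. -/
def elimForm (φ ψ : (Fin (n + 1) → ℤ) × G) : (Fin n → ℤ) × G :=
  initForm (φ.1 (Fin.last n) • ψ - ψ.1 (Fin.last n) • φ)

theorem affineEval_elimForm (y : Fin n → G) (g : G) (φ ψ : (Fin (n + 1) → ℤ) × G) :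
    affineEval y (elimForm φ ψ) = φ.1 (Fin.last n) • affineEval (Fin.snoc y g) ψ -
      ψ.1 (Fin.last n) • affineEval (Fin.snoc y g) φ := by
  rw [← map_zsmul, ← map_zsmul, ← map_sub, affineEval_snoc, elimForm]
  simp [mul_comm]

end AffineForm

/-- `lt φ` and `eq φ` are the conditions `φ x < 0` and `φ x = 0`, where `(k, d) : (α → ℤ) × G`
stands for the affine form `x ↦ ∑ i, k i • x i + d`. -/
inductive LinCond (α G : Type*)
  | lt (φ : (α → ℤ) × G)
  | eq (φ : (α → ℤ) × G)

namespace LinCond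

variable {G : Type*} {α β : Type*}

def form : LinCond α G → (α → ℤ) × G
  | lt φ => φ
  | eq φ => φ

def map (F : (α → ℤ) × G → (β → ℤ) × G) : LinCond α G → LinCond β G
  | lt φ => lt (F φ)
  | eq φ => eq (F φ)

def negDisjuncts [Neg G] : LinCond α G → List (LinCond α G)
  | lt φ => [lt (-φ), eq φ]
  | eq φ => [lt φ, lt (-φ)]

variable [AddCommGroup G] [LinearOrder G] [Fintype α] [Fintype β]

def Holds : LinCond α G → (α → G) → Prop
  | lt φ, x => affineEval x φ < 0
  | eq φ, x => affineEval x φ = 0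

variable [IsOrderedAddMonoid G]

theorem holds_map_iff {F : (α → ℤ) × G → (β → ℤ) × G} {c : LinCond α G} {x : α → G}
    {y : β → G} {a : ℤ} (ha : 0 < a) (h : affineEval y (F c.form) = a • affineEval x c.form) :
    (c.map F).Holds y ↔ c.Holds x := by
  cases c <;> simp only [map, form, Holds] at h ⊢ <;> rw [h]
  · exact smul_neg_iff_of_pos_left ha
  · simp [ha.ne']

theorem not_holds_iff (c : LinCond α G) (x : α → G) :
    ¬ c.Holds x ↔ ∃ c' ∈ c.negDisjuncts, c'.Holds x := by
  cases c <;> simp only [negDisjuncts, Holds, List.mem_cons, List.not_mem_nil, or_false,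
    exists_eq_or_imp, exists_eq_left, map_neg, neg_neg_iff_pos]
  · exact not_lt.trans le_iff_lt_or_eq'
  · exact ne_iff_lt_or_gt

end LinCond

section Periodic

variable {V : Type*} [AddCommGroup V]

def IsPeriodic (P : Set V) : Prop :=
  ∃ N : ℕ, 0 < N ∧ ∀ x ∈ P, ∀ z, x + N • z ∈ P

theorem isPeriodic_univ : IsPeriodic (Set.univ : Set V) :=
  ⟨1, one_pos, fun _ _ _ => trivial⟩

theorem isPeriodic_empty : IsPeriodic (∅ : Set V) :=
  ⟨1, one_pos, fun _ h => h.elim⟩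

theorem IsPeriodic.compl {P : Set V} (hP : IsPeriodic P) : IsPeriodic Pᶜ := by
  obtain ⟨N, hN, hP⟩ := hP
  refine ⟨N, hN, fun x hx z hxz => hx ?_⟩
  simpa using hP _ hxz (-z)

theorem IsPeriodic.inter {P Q : Set V} (hP : IsPeriodic P) (hQ : IsPeriodic Q) :
    IsPeriodic (P ∩ Q) := by
  obtain ⟨N, hN, hP⟩ := hP
  obtain ⟨M, hM, hQ⟩ := hQ
  refine ⟨M * N, Nat.mul_pos hM hN, fun x hx z => ⟨?_, ?_⟩⟩
  · simpa [smul_smul, mul_comm] using hP x hx.1 (M • z)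
  · simpa [smul_smul] using hQ x hx.2 (N • z)

theorem IsPeriodic.union {P Q : Set V} (hP : IsPeriodic P) (hQ : IsPeriodic Q) :
    IsPeriodic (P ∪ Q) := by
  simpa [Set.compl_inter] using (hP.compl.inter hQ.compl).compl

end Periodic

section Semilinear

variable {G : Type*} [AddCommGroup G] [LinearOrder G] {α : Type*} [Fintype α]

inductive IsSemilinear : Set (α → G) → Prop
  | empty : IsSemilinear ∅
  | cell_inter (l : List (LinCond α G)) {P : Set (α → G)} :
      IsPeriodic P → IsSemilinear ({x | ∀ c ∈ l, c.Holds x} ∩ P)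
  | union {X Y : Set (α → G)} : IsSemilinear X → IsSemilinear Y → IsSemilinear (X ∪ Y)

namespace IsSemilinear

theorem of_isPeriodic {P : Set (α → G)} (hP : IsPeriodic P) : IsSemilinear P := by
  simpa using cell_inter [] hP

theorem univ : IsSemilinear (Set.univ : Set (α → G)) :=
  of_isPeriodic isPeriodic_univ

theorem setOf_forall_holds (l : List (LinCond α G)) : IsSemilinear {x | ∀ c ∈ l, c.Holds x} := by
  simpa using cell_inter l isPeriodic_univ

theorem setOf_holds (c : LinCond α G) : IsSemilinear {x | c.Holds x} := by
  simpa using setOf_forall_holds [c]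

theorem setOf_exists_holds (l : List (LinCond α G)) : IsSemilinear {x | ∃ c ∈ l, c.Holds x} := by
  induction l with
  | nil => simpa using empty
  | cons c l ih =>
    simpa [Set.ofPred_or] using (setOf_holds c).union ih

theorem inter {X Y : Set (α → G)} (hX : IsSemilinear X) (hY : IsSemilinear Y) :
    IsSemilinear (X ∩ Y) := by
  induction hX with
  | empty => simpa using empty
  | union _ _ ih₁ ih₂ => rw [Set.union_inter_distrib_right]; exact ih₁.union ih₂
  | cell_inter l hP =>
    induction hY with
    | empty => simpa using empty
    | union _ _ ih₁ ih₂ => rw [Set.inter_union_distrib_left]; exact ih₁.union ih₂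
    | cell_inter m hQ =>
      convert cell_inter (l ++ m) (hP.inter hQ) using 1
      ext x
      simp only [Set.mem_inter_iff, Set.mem_ofPred_eq, List.mem_append, or_imp, forall_and]
      tauto

theorem setOf_forall_mem {ι : Type*} (s : List ι) (p : ι → Prop) {X : ι → Set (α → G)}
    (hX : ∀ i ∈ s, p i → IsSemilinear (X i)) : IsSemilinear {x | ∀ i ∈ s, p i → x ∈ X i} := by
  induction s with
  | nil => simpa using univ
  | cons i s ih =>
    have hs := ih fun j hj => hX j (List.mem_cons_of_mem i hj)
    by_cases hi : p i
    · convert (hX i List.mem_cons_self hi).inter hs using 1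
      ext x
      simp [hi]
    · simpa [hi] using hs

variable [IsOrderedAddMonoid G]

theorem compl {X : Set (α → G)} (hX : IsSemilinear X) : IsSemilinear Xᶜ := by
  induction hX with
  | empty => simpa using univ
  | union _ _ ih₁ ih₂ => rw [Set.compl_union]; exact ih₁.inter ih₂
  | cell_inter l hP =>
    rw [Set.compl_inter]
    refine IsSemilinear.union ?_ (of_isPeriodic hP.compl)
    induction l with
    | nil => simpa using empty
    | cons c l ih =>
      have : {x | ∀ c' ∈ c :: l, c'.Holds x}ᶜ = {x | ∃ c' ∈ c.negDisjuncts, c'.Holds x} ∪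
          {x | ∀ c' ∈ l, c'.Holds x}ᶜ := by
        ext x
        simp only [Set.mem_compl_iff, Set.mem_ofPred_eq, Set.mem_union, List.forall_mem_cons,
          not_and_or, LinCond.not_holds_iff]
      rw [this]
      exact (setOf_exists_holds _).union ih

end IsSemilinear

end Semilinear

section Helly

variable {α ι κ : Type*} [LinearOrder α]

theorem biInter_eq_univ_or_of_isUpperSet (s : Finset ι) {A : ι → Set α}
    (hA : ∀ i ∈ s, IsUpperSet (A i)) : ⋂ i ∈ s, A i = Set.univ ∨ ∃ i ∈ s, ⋂ j ∈ s, A j = A i := by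
  rcases s.eq_empty_or_nonempty with rfl | hs
  · simp
  obtain ⟨i, hi, hmax⟩ := s.exists_max_image (fun i => upperClosure (A i)) hs
  refine Or.inr ⟨i, hi, (Set.biInter_subset_of_mem hi).antisymm (Set.subset_iInter₂ ?_)⟩
  intro j hj
  simpa [(hA i hi).upperClosure, (hA j hj).upperClosure] using
    UpperSet.coe_subset_coe.2 (hmax j hj)

theorem biInter_eq_univ_or_of_isLowerSet (s : Finset ι) {A : ι → Set α}
    (hA : ∀ i ∈ s, IsLowerSet (A i)) : ⋂ i ∈ s, A i = Set.univ ∨ ∃ i ∈ s, ⋂ j ∈ s, A j = A i := by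
  rcases s.eq_empty_or_nonempty with rfl | hs
  · simp
  obtain ⟨i, hi, hmin⟩ := s.exists_min_image (fun i => lowerClosure (A i)) hs
  refine Or.inr ⟨i, hi, (Set.biInter_subset_of_mem hi).antisymm (Set.subset_iInter₂ ?_)⟩
  intro j hj
  simpa [(hA i hi).lowerClosure, (hA j hj).lowerClosure] using
    LowerSet.coe_subset_coe.2 (hmin j hj)

/-- A one-dimensional Helly theorem. -/
theorem exists_mem_of_isUpperSet_of_isLowerSet {T : Set α} {s : Finset ι} {t : Finset κ}
    {A : ι → Set α} {B : κ → Set α} (hA : ∀ i ∈ s, IsUpperSet (A i))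
    (hB : ∀ j ∈ t, IsLowerSet (B j)) (hT : T.Nonempty) (hTA : ∀ i ∈ s, (T ∩ A i).Nonempty)
    (hTB : ∀ j ∈ t, (T ∩ B j).Nonempty)
    (hTAB : ∀ i ∈ s, ∀ j ∈ t, (T ∩ A i ∩ B j).Nonempty) :
    ∃ x ∈ T, (∀ i ∈ s, x ∈ A i) ∧ ∀ j ∈ t, x ∈ B j := by
  suffices (T ∩ (⋂ i ∈ s, A i) ∩ ⋂ j ∈ t, B j).Nonempty by
    obtain ⟨x, ⟨hxT, hxA⟩, hxB⟩ := this
    exact ⟨x, hxT, Set.mem_iInter₂.1 hxA, Set.mem_iInter₂.1 hxB⟩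
  rcases biInter_eq_univ_or_of_isUpperSet s hA with hU | ⟨i, hi, hU⟩ <;>
  rcases biInter_eq_univ_or_of_isLowerSet t hB with hW | ⟨j, hj, hW⟩ <;>
  rw [hU, hW]
  · simpa using hT
  · simpa using hTB j hj
  · simpa using hTA i hi
  · exact hTAB i hi j hj

end Helly

section Projection

theorem Fin.snoc_add_nsmul {M : Type*} [AddMonoid M] {n : ℕ} (y z : Fin n → M) (g h : M)
    (N : ℕ) : (Fin.snoc (y + N • z) (g + N • h) : Fin (n + 1) → M) =
      Fin.snoc y g + N • Fin.snoc z h := by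
  ext i
  induction i using Fin.lastCases <;> simp

theorem IsPeriodic.exists_snoc {M : Type*} [AddCommGroup M] {n : ℕ}
    {P : Set (Fin (n + 1) → M)} (hP : IsPeriodic P) : IsPeriodic {y | ∃ g, Fin.snoc y g ∈ P} := by
  obtain ⟨N, hN, hP⟩ := hP
  refine ⟨N, hN, fun y ⟨g, hg⟩ z => ⟨g, ?_⟩⟩
  have := Fin.snoc_add_nsmul y z g 0 N
  rw [smul_zero, add_zero] at this
  exact this ▸ hP _ hg _

theorem IsPeriodic.exists_snoc_affineEval_eq_zero {M : Type*} [AddCommGroup M] {n : ℕ}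
    {P : Set (Fin (n + 1) → M)} (hP : IsPeriodic P) {φ₀ : (Fin (n + 1) → ℤ) × M}
    (ha : 0 < φ₀.1 (Fin.last n)) :
    IsPeriodic {y | ∃ g, affineEval (Fin.snoc y g) φ₀ = 0 ∧ Fin.snoc y g ∈ P} := by
  obtain ⟨N, hN, hP⟩ := hP
  obtain ⟨m, hm⟩ := Int.eq_ofNat_of_zero_le ha.le
  refine ⟨m * N, Nat.mul_pos (by omega) hN, ?_⟩
  rintro y ⟨g, hg, hgP⟩ z
  -- shift along a vector on which the linear part of `φ₀` vanishes
  let w := affineEval z (initForm (φ₀.1, 0))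
  have hmz : affineEval (m • z) (initForm (φ₀.1, 0)) = m • w := by
    simp [w, affineEval_apply, initForm, Finset.smul_sum, smul_comm (m : ℕ)]
  have hv : affineEval (Fin.snoc (m • z) (-w) : Fin (n + 1) → M) (φ₀.1, 0) = 0 := by
    rw [affineEval_snoc, hmz, hm]
    module
  have hshift : (Fin.snoc (y + (m * N) • z) (g + N • -w) : Fin (n + 1) → M) =
      Fin.snoc y g + N • Fin.snoc (m • z) (-w) := by
    rw [← Fin.snoc_add_nsmul, mul_nsmul]
  refine ⟨g + N • -w, ?_, ?_⟩ <;> rw [hshift]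
  · rw [affineEval_add_nsmul, hg, hv, smul_zero, add_zero]
  · exact hP _ hgP _

variable {G : Type*} [AddCommGroup G] [LinearOrder G] [IsOrderedAddMonoid G] {n : ℕ}

theorem isLowerSet_setOf_add_zsmul_lt_zero (r : G) {a : ℤ} (ha : 0 ≤ a) :
    IsLowerSet {g : G | r + a • g < 0} :=
  fun _ _ hgg' hg => (add_le_add_right (zsmul_le_zsmul_right ha hgg') r).trans_lt hg

theorem isUpperSet_setOf_add_zsmul_lt_zero (r : G) {a : ℤ} (ha : a ≤ 0) :
    IsUpperSet {g : G | r + a • g < 0} :=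
  fun _ _ hgg' hg => (add_le_add_right (smul_le_smul_of_nonpos_left hgg' ha) r).trans_lt hg

/-- Fourier–Motzkin elimination of the last variable from strict inequalities, with the
solution taken in a prescribed coset of `N • G`. -/
theorem ZSMulDense.exists_forall_affineEval_snoc_lt_zero [Nontrivial G] (hG : ZSMulDense G)
    (Φ : List ((Fin (n + 1) → ℤ) × G)) {y : Fin n → G}
    (hΦ : ∀ φ ∈ Φ, ∀ ψ ∈ Φ, 0 < φ.1 (Fin.last n) → ψ.1 (Fin.last n) < 0 →
      affineEval y (elimForm φ ψ) < 0)
    {N : ℕ} (hN : 0 < N) (g₀ : G) :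
    ∃ h : G, ∀ φ ∈ Φ, φ.1 (Fin.last n) ≠ 0 →
      affineEval (Fin.snoc y (g₀ + N • h) : Fin (n + 1) → G) φ < 0 := by
  classical
  let A : (Fin (n + 1) → ℤ) × G → Set G :=
    fun φ => {g | affineEval y (initForm φ) + φ.1 (Fin.last n) • g < 0}
  have hsingle : ∀ φ, φ.1 (Fin.last n) ≠ 0 → (Set.range (g₀ + N • ·) ∩ A φ).Nonempty := by
    intro φ hφ
    obtain ⟨h, hh⟩ := hG.exists_add_smul_lt_zero hN g₀ (affineEval y (initForm φ)) hφ
    exact ⟨_, ⟨h, rfl⟩, hh⟩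
  obtain ⟨g, ⟨h, rfl⟩, hup, hlow⟩ := exists_mem_of_isUpperSet_of_isLowerSet
    (T := Set.range (g₀ + N • ·)) (s := Φ.toFinset.filter (·.1 (Fin.last n) < 0))
    (t := Φ.toFinset.filter (0 < ·.1 (Fin.last n)))
    (fun φ hφ => isUpperSet_setOf_add_zsmul_lt_zero _ (Finset.mem_filter.1 hφ).2.le)
    (fun φ hφ => isLowerSet_setOf_add_zsmul_lt_zero _ (Finset.mem_filter.1 hφ).2.le)
    ⟨g₀ + N • 0, 0, rfl⟩
    (fun φ hφ => hsingle φ (Finset.mem_filter.1 hφ).2.ne)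
    (fun φ hφ => hsingle φ (Finset.mem_filter.1 hφ).2.ne')
    (by
      intro ψ hψ φ hφ
      simp only [Finset.mem_filter, List.mem_toFinset] at hψ hφ
      have hcross := hΦ φ hφ.1 ψ hψ.1 hφ.2 hψ.2
      simp only [affineEval_elimForm y 0, affineEval_snoc, smul_zero, add_zero] at hcross
      obtain ⟨h, hφh, hψh⟩ := hG.exists_add_smul_lt_zero_and hN g₀ hφ.2 hψ.2 hcross
      exact ⟨_, ⟨⟨h, rfl⟩, hψh⟩, hφh⟩)
  refine ⟨h, fun φ hφ hφ0 => ?_⟩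
  rw [affineEval_snoc]
  rcases hφ0.lt_or_gt with hneg | hpos
  · exact hup φ (by simp [hφ, hneg])
  · exact hlow φ (by simp [hφ, hpos])

theorem LinCond.holds_map_initForm_iff {c : LinCond (Fin (n + 1)) G}
    (hc : c.form.1 (Fin.last n) = 0) (y : Fin n → G) (g : G) :
    (c.map initForm).Holds y ↔ c.Holds (Fin.snoc y g) :=
  LinCond.holds_map_iff one_pos (by simp [affineEval_snoc, hc])

theorem LinCond.holds_map_elimForm_iff {φ₀ : (Fin (n + 1) → ℤ) × G} (ha : 0 < φ₀.1 (Fin.last n))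
    {y : Fin n → G} {g : G} (h₀ : affineEval (Fin.snoc y g) φ₀ = 0) (c : LinCond (Fin (n + 1)) G) :
    (c.map (elimForm φ₀)).Holds y ↔ c.Holds (Fin.snoc y g) :=
  LinCond.holds_map_iff ha (by simp [affineEval_elimForm y g, h₀])

namespace IsSemilinear

theorem exists_snoc_cell_inter_of_eq_mem {l : List (LinCond (Fin (n + 1)) G)}
    {P : Set (Fin (n + 1) → G)} (hP : IsPeriodic P) {φ₀ : (Fin (n + 1) → ℤ) × G}
    (h₀ : LinCond.eq φ₀ ∈ l) (ha : 0 < φ₀.1 (Fin.last n)) :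
    IsSemilinear {y | ∃ g, Fin.snoc y g ∈ {x | ∀ c ∈ l, c.Holds x} ∩ P} := by
  convert (setOf_forall_holds (l.map (LinCond.map (elimForm φ₀)))).inter
    (of_isPeriodic (hP.exists_snoc_affineEval_eq_zero ha)) using 1
  ext y
  simp only [Set.mem_inter_iff, Set.mem_ofPred_eq, List.mem_map, forall_exists_index, and_imp,
    forall_apply_eq_imp_iff₂]
  constructor
  · rintro ⟨g, hl, hgP⟩
    exact ⟨fun c hc => (LinCond.holds_map_elimForm_iff ha (hl _ h₀) c).2 (hl c hc), g, hl _ h₀, hgP⟩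
  · rintro ⟨hl, g, hg, hgP⟩
    exact ⟨g, fun c hc => (LinCond.holds_map_elimForm_iff ha hg c).1 (hl c hc), hgP⟩

theorem exists_snoc_mem_cell_inter_iff [Nontrivial G] (hG : ZSMulDense G)
    {l : List (LinCond (Fin (n + 1)) G)} {P : Set (Fin (n + 1) → G)} (hP : IsPeriodic P)
    (heq : ∀ φ, LinCond.eq φ ∈ l → φ.1 (Fin.last n) = 0) (y : Fin n → G) :
    (∃ g, Fin.snoc y g ∈ {x | ∀ c ∈ l, c.Holds x} ∩ P) ↔
      (∀ c ∈ l, c.form.1 (Fin.last n) = 0 → (c.map initForm).Holds y) ∧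
      (∀ c ∈ l, 0 < c.form.1 (Fin.last n) → ∀ c' ∈ l, c'.form.1 (Fin.last n) < 0 →
        affineEval y (elimForm c.form c'.form) < 0) ∧
      ∃ g, Fin.snoc y g ∈ P := by
  have hlt : ∀ c ∈ l, c.form.1 (Fin.last n) ≠ 0 → ∀ x, c.Holds x ↔ affineEval x c.form < 0 := by
    intro c hc hne x
    cases c with
    | lt φ => rfl
    | eq φ => exact absurd (heq φ hc) hne
  constructor
  · rintro ⟨g, hl, hgP⟩
    refine ⟨fun c hc hc0 => (LinCond.holds_map_initForm_iff hc0 y g).2 (hl c hc),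
      fun c hc hpos c' hc' hneg => ?_, g, hgP⟩
    rw [affineEval_elimForm y g]
    have h₁ := (hlt c hc hpos.ne' _).1 (hl c hc)
    have h₂ := (hlt c' hc' hneg.ne _).1 (hl c' hc')
    exact sub_neg_of_lt (((smul_neg_iff_of_pos_left hpos).2 h₂).trans
      (smul_pos_of_neg_of_neg hneg h₁))
  · rintro ⟨hpure, hcross, g₀, hg₀⟩
    obtain ⟨N, hN, hPN⟩ := hP
    obtain ⟨h, hh⟩ := hG.exists_forall_affineEval_snoc_lt_zero (l.map LinCond.form) (y := y)
      (by
        simp only [List.mem_map]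
        rintro _ ⟨c, hc, rfl⟩ _ ⟨c', hc', rfl⟩ hpos hneg
        exact hcross c hc hpos c' hc' hneg)
      hN g₀
    refine ⟨g₀ + N • h, fun c hc => ?_, ?_⟩
    · by_cases hc0 : c.form.1 (Fin.last n) = 0
      · exact (LinCond.holds_map_initForm_iff hc0 y _).1 (hpure c hc hc0)
      · exact (hlt c hc hc0 _).2 (hh _ (List.mem_map_of_mem hc) hc0)
    · have := Fin.snoc_add_nsmul y 0 g₀ h N
      rw [smul_zero, add_zero] at this
      exact this ▸ hPN _ hg₀ _

theorem exists_snoc_cell_inter_of_forall_eq [Nontrivial G] (hG : ZSMulDense G)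
    {l : List (LinCond (Fin (n + 1)) G)} {P : Set (Fin (n + 1) → G)} (hP : IsPeriodic P)
    (heq : ∀ φ, LinCond.eq φ ∈ l → φ.1 (Fin.last n) = 0) :
    IsSemilinear {y | ∃ g, Fin.snoc y g ∈ {x | ∀ c ∈ l, c.Holds x} ∩ P} := by
  have key : {y | ∃ g, Fin.snoc y g ∈ {x | ∀ c ∈ l, c.Holds x} ∩ P} =
      {y | ∀ c ∈ l, c.form.1 (Fin.last n) = 0 → y ∈ {y | (c.map initForm).Holds y}} ∩
      {y | ∀ c ∈ l, 0 < c.form.1 (Fin.last n) → y ∈ {y | ∀ c' ∈ l, c'.form.1 (Fin.last n) < 0 →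
        y ∈ {y | affineEval y (elimForm c.form c'.form) < 0}}} ∩
      {y | ∃ g, Fin.snoc y g ∈ P} :=
    Set.ext fun y => (exists_snoc_mem_cell_inter_iff hG hP heq y).trans and_assoc.symm
  rw [key]
  exact ((setOf_forall_mem l _ fun c _ _ => setOf_holds _).inter
    (setOf_forall_mem l _ fun c _ _ => setOf_forall_mem l _ fun c' _ _ =>
      setOf_holds (LinCond.lt (elimForm c.form c'.form)))).inter (of_isPeriodic hP.exists_snoc)

theorem exists_snoc [Nontrivial G] (hG : ZSMulDense G) {X : Set (Fin (n + 1) → G)}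
    (hX : IsSemilinear X) : IsSemilinear {y | ∃ g, Fin.snoc y g ∈ X} := by
  induction hX with
  | empty => simpa using empty
  | union _ _ ih₁ ih₂ => simpa [exists_or, Set.ofPred_or] using ih₁.union ih₂
  | @cell_inter l P hP =>
    by_cases h : ∃ φ, LinCond.eq φ ∈ l ∧ φ.1 (Fin.last n) ≠ 0
    · obtain ⟨φ, hφ, hφ0⟩ := h
      rcases hφ0.lt_or_gt with hneg | hpos
      · have hl : ∀ x, (∀ c ∈ LinCond.eq (-φ) :: l, c.Holds x) ↔ ∀ c ∈ l, c.Holds x := by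
          simpa [LinCond.Holds] using fun x h => h _ hφ
        simpa only [hl] using exists_snoc_cell_inter_of_eq_mem (l := LinCond.eq (-φ) :: l) hP
          List.mem_cons_self (show 0 < (-φ).1 (Fin.last n) by simpa using hneg)
      · exact exists_snoc_cell_inter_of_eq_mem hP hφ hpos
    · push Not at h
      exact exists_snoc_cell_inter_of_forall_eq hG hP h

end IsSemilinear

end Projection

section Formula

open FirstOrder.Language

variable {G : Type*} [AddCommGroup G] [LinearOrder G] [IsOrderedAddMonoid G] {κ : Type*}

theorem exists_affineEval_eq_realize {n : ℕ} (v : κ → G) (t : Log.Term (κ ⊕ Fin n)) :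
    ∃ φ : (Fin n → ℤ) × G, ∀ xs, t.realize (Sum.elim v xs) = affineEval xs φ := by
  induction t with
  | var i =>
    cases i with
    | inl a => exact ⟨(0, v a), fun xs => by simp [affineEval_apply]⟩
    | inr i => exact ⟨(Pi.single i 1, 0), fun xs => by simp [affineEval_apply, Pi.single_apply]⟩
  | @func l F ts ih =>
    match l, F with
    | 0, _ => exact ⟨0, fun xs => by rw [map_zero]; rfl⟩
    | 2, _ =>
      obtain ⟨φ₀, h₀⟩ := ih 0
      obtain ⟨φ₁, h₁⟩ := ih 1
      exact ⟨φ₀ + φ₁, fun xs => by rw [map_add, ← h₀, ← h₁]; rfl⟩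

theorem isSemilinear_setOf_realize [Nontrivial G] (hG : ZSMulDense G) (v : κ → G) {n : ℕ}
    (θ : Log.BoundedFormula κ n) : IsSemilinear {xs : Fin n → G | θ.Realize v xs} := by
  induction θ with
  | falsum => simpa [BoundedFormula.Realize] using IsSemilinear.empty
  | equal t₁ t₂ =>
    obtain ⟨φ₁, h₁⟩ := exists_affineEval_eq_realize v t₁
    obtain ⟨φ₂, h₂⟩ := exists_affineEval_eq_realize v t₂
    convert IsSemilinear.setOf_holds (LinCond.eq (φ₁ - φ₂)) using 1
    ext xs
    simp [BoundedFormula.Realize, LinCond.Holds, h₁, h₂, sub_eq_zero]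
  | @rel _ l R ts =>
    match l, R with
    | 2, _ =>
      obtain ⟨φ₀, h₀⟩ := exists_affineEval_eq_realize v (ts 0)
      obtain ⟨φ₁, h₁⟩ := exists_affineEval_eq_realize v (ts 1)
      convert IsSemilinear.setOf_holds (LinCond.lt (φ₀ - φ₁)) using 1
      ext xs
      simp only [Set.mem_ofPred_eq, LinCond.Holds, map_sub, sub_neg, ← h₀, ← h₁]
      rfl
  | imp θ₁ θ₂ ih₁ ih₂ =>
    convert ih₁.compl.union ih₂ using 1
    ext xs
    simp [imp_iff_not_or]
  | all θ ih =>
    convert (ih.compl.exists_snoc hG).compl using 1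
    ext xs
    simp

end Formula

section CutFilter

open Filter

variable {α : Type*} [LinearOrder α]

def cutFilter (S T : Set α) : Filter α :=
  ⨅ p ∈ S ×ˢ T, 𝓟 (Set.Ioo p.1 p.2)

theorem hasBasis_cutFilter {S T : Set α} (hS : S.Nonempty) (hT : T.Nonempty) :
    (cutFilter S T).HasBasis (fun p => p ∈ S ×ˢ T) fun p => Set.Ioo p.1 p.2 := by
  refine hasBasis_biInf_principal ?_ (hS.prod hT)
  rintro ⟨s, t⟩ ⟨hs, ht⟩ ⟨s', t'⟩ ⟨hs', ht'⟩
  refine ⟨(max s s', min t t'), ⟨?_, ?_⟩, ?_, ?_⟩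
  · rcases le_total s s' with h | h <;> simp [h, hs, hs']
  · rcases le_total t t' with h | h <;> simp [h, ht, ht']
  · exact Set.Ioo_subset_Ioo (le_max_left _ _) (min_le_left _ _)
  · exact Set.Ioo_subset_Ioo (le_max_right _ _) (min_le_right _ _)

theorem eventually_mem_Ioo_cutFilter {S T : Set α} {s t : α} (hs : s ∈ S) (ht : t ∈ T) :
    ∀ᶠ x in cutFilter S T, x ∈ Set.Ioo s t :=
  mem_iInf_of_mem (s, t) (mem_iInf_of_mem ⟨hs, ht⟩ (mem_principal_self _))

end CutFilter

section Fibre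

open Filter

theorem Fin.cons_add_nsmul {M : Type*} [AddMonoid M] {n : ℕ} (g h : M) (y z : Fin n → M)
    (N : ℕ) : (Fin.cons (g + N • h) (y + N • z) : Fin (n + 1) → M) =
      Fin.cons g y + N • Fin.cons h z := by
  ext i
  induction i using Fin.cases <;> simp

theorem IsPeriodic.preimage_cons {M : Type*} [AddCommGroup M] {n : ℕ}
    {P : Set (Fin (n + 1) → M)} (hP : IsPeriodic P) (p : Fin n → M) :
    IsPeriodic {g | Fin.cons g p ∈ P} := by
  obtain ⟨N, hN, hP⟩ := hP
  refine ⟨N, hN, fun g hg h => ?_⟩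
  have := Fin.cons_add_nsmul g h p 0 N
  rw [smul_zero, add_zero] at this
  show Fin.cons (g + N • h) p ∈ P
  exact this ▸ hP _ hg _

variable {G : Type*} [AddCommGroup G] [LinearOrder G] [IsOrderedAddMonoid G] {n : ℕ}
  {l : Filter G} (hl : ∀ a : ℤ, a ≠ 0 → ∀ e : G, (∀ᶠ g in l, a • g < e) ∨ ∀ᶠ g in l, e < a • g)
include hl

theorem LinCond.eventuallyConst_holds_cons (c : LinCond (Fin (n + 1)) G) (p : Fin n → G) :
    EventuallyConst (fun g => c.Holds (Fin.cons g p)) l := by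
  set a := c.form.1 0
  set r := affineEval p (tailForm c.form)
  have hval : ∀ g, affineEval (Fin.cons g p) c.form = a • g + r := fun g => affineEval_cons g p _
  by_cases ha : a = 0
  · convert EventuallyConst.const (c.Holds (Fin.cons 0 p)) using 2 with g
    cases c <;> simp only [LinCond.Holds, LinCond.form] at hval ⊢ <;> simp [hval, ha]
  rw [eventuallyConst_pred]
  rcases hl a ha (-r) with h | h <;> cases c <;>
    simp only [LinCond.Holds, LinCond.form] at hval ⊢ <;> simp only [hval]
  · exact Or.inl (h.mono fun g hg => by rwa [← lt_neg_iff_add_neg])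
  · exact Or.inr (h.mono fun g hg => by rw [← eq_neg_iff_add_eq_zero]; exact hg.ne)
  · exact Or.inr (h.mono fun g hg => by rw [← lt_neg_iff_add_neg]; exact hg.not_gt)
  · exact Or.inr (h.mono fun g hg => by rw [← eq_neg_iff_add_eq_zero]; exact hg.ne')

theorem IsSemilinear.exists_isPeriodic_eventuallyEq_cons {X : Set (Fin (n + 1) → G)}
    (hX : IsSemilinear X) (p : Fin n → G) :
    ∃ P : Set G, IsPeriodic P ∧ {g | Fin.cons g p ∈ X} =ᶠ[l] P := by
  induction hX with
  | empty => exact ⟨∅, isPeriodic_empty, .rfl⟩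
  | union _ _ ih₁ ih₂ =>
    obtain ⟨P, hP, h₁⟩ := ih₁
    obtain ⟨Q, hQ, h₂⟩ := ih₂
    exact ⟨P ∪ Q, hP.union hQ, h₁.union h₂⟩
  | @cell_inter cs P hP =>
    by_cases h : ∀ c ∈ cs, ∀ᶠ g in l, c.Holds (Fin.cons g p)
    · refine ⟨_, hP.preimage_cons p, eventuallyEq_set.2 ?_⟩
      filter_upwards [(eventually_all_finite cs.finite_toSet).2 h] with g hg
      exact ⟨And.right, And.intro hg⟩
    · simp only [not_forall] at h
      obtain ⟨c, hc, hnot⟩ := h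
      refine ⟨∅, isPeriodic_empty, eventuallyEq_set.2 ?_⟩
      filter_upwards [(eventuallyConst_pred.1 (c.eventuallyConst_holds_cons hl p)).resolve_left
        hnot] with g hg
      simpa using fun h _ => hg (h c hc)

end Fibre

section ConvexSubgroup

open Filter

variable {G : Type*} [AddCommGroup G] [LinearOrder G] [IsOrderedAddMonoid G] {H : AddSubgroup G}

theorem AddSubgroup.exists_pos_mem_of_ne_bot (hH : H ≠ ⊥) : ∃ c ∈ H, 0 < c := by
  obtain ⟨x, hx, hx0⟩ := H.bot_or_exists_ne_zero.resolve_left hH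
  rcases hx0.lt_or_gt with h | h
  · exact ⟨-x, H.neg_mem hx, neg_pos.2 h⟩
  · exact ⟨x, hx, h⟩

theorem upperBounds_nonempty_of_ne_top (hconv : ∀ a b, b ∈ H → 0 ≤ a → a ≤ b → a ∈ H)
    (hH : H ≠ ⊤) : (upperBounds (H : Set G)).Nonempty := by
  obtain ⟨u, hu⟩ : ∃ u, u ∉ H := by
    by_contra! h
    exact hH (eq_top_iff.2 fun x _ => h x)
  refine ⟨|u|, fun s hs => le_of_not_gt fun hlt => hu ?_⟩
  have := hconv |u| s hs (abs_nonneg u) hlt.le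
  rcases abs_choice u with h | h <;> rw [h] at this
  · exact this
  · simpa using H.neg_mem this

variable (hG : ZSMulDense G)
include hG

theorem exists_mem_upperBounds_lt (hH : H ≠ ⊥) {b : G} (hb : b ∈ upperBounds (H : Set G)) :
    ∃ b' ∈ upperBounds (H : Set G), b' < b := by
  obtain ⟨c, hc, hc0⟩ := H.exists_pos_mem_of_ne_bot hH
  obtain ⟨h, hh, hh'⟩ := hG 2 two_ne_zero (b - c) b (sub_lt_self _ hc0)
  rw [two_zsmul] at hh hh'
  refine ⟨h, fun s hs => le_of_not_gt fun hlt => ?_, ?_⟩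
  · have : b < s + s + c := calc
      b < h + h + c := sub_lt_iff_lt_add.1 hh
      _ < s + s + c := by gcongr
    exact this.not_ge (hb (H.add_mem (H.add_mem hs hs) hc))
  · by_contra! hbh
    have hb0 : 0 < b := hc0.trans_le (hb hc)
    exact hh'.not_ge ((le_add_of_nonneg_left hb0.le).trans (add_le_add hbh hbh))

variable (hconv : ∀ a b, b ∈ H → 0 ≤ a → a ≤ b → a ∈ H)
include hconv

/-- No element of the divisible hull (`e / a`) fills the gap above `H`. -/
theorem exists_lt_smul_or_exists_smul_lt (hH : H ≠ ⊥) {a : ℤ} (ha : 0 < a) (e : G) :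
    (∃ s ∈ H, e < a • s) ∨ ∃ b ∈ upperBounds (H : Set G), a • b < e := by
  by_contra! h
  obtain ⟨hH', hB⟩ := h
  obtain ⟨c, hc, hc0⟩ := H.exists_pos_mem_of_ne_bot hH
  have hac : 0 < a • c := smul_pos ha hc0
  obtain ⟨g₁, hg₁, hg₁'⟩ := hG a ha.ne' (e - a • c) e (sub_lt_self _ hac)
  obtain ⟨g₂, hg₂, hg₂'⟩ := hG a ha.ne' e (e + a • c) (lt_add_of_pos_right _ hac)
  have hg₁pos : 0 < g₁ := by
    have : a • c < a • g₁ := by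
      have := hH' (c + c) (H.add_mem hc hc)
      rw [smul_add] at this
      exact lt_of_le_of_lt (le_sub_iff_add_le.2 this) hg₁
    exact (smul_pos_iff_of_pos_left ha).1 (hac.trans this)
  have hg₁H : g₁ ∈ H := by
    obtain ⟨s, hs, hlt⟩ : ∃ s ∈ H, g₁ < s := by
      by_contra! h
      exact (hB g₁ h).not_gt hg₁'
    exact hconv g₁ s hs hg₁pos.le hlt.le
  have hdiff : g₂ - g₁ ∈ H := by
    refine hconv _ (c + c) (H.add_mem hc hc) (sub_nonneg.2 ?_) ?_
    · exact ((zsmul_lt_zsmul_iff_right ha).1 (hg₁'.trans hg₂)).le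
    · rw [← zsmul_le_zsmul_iff_right ha, smul_sub, smul_add]
      calc a • g₂ - a • g₁ ≤ (e + a • c) - (e - a • c) := sub_le_sub hg₂'.le hg₁.le
        _ = a • c + a • c := by abel
  have hg₂H : g₂ ∈ H := by simpa using H.add_mem hg₁H hdiff
  exact (hH' g₂ hg₂H).not_gt hg₂

theorem eventually_smul_lt_or_eventually_lt_smul (hH : H ≠ ⊥) (hH' : H ≠ ⊤) {a : ℤ} (ha : a ≠ 0)
    (e : G) :
    (∀ᶠ g in cutFilter H (upperBounds H), a • g < e) ∨
      ∀ᶠ g in cutFilter H (upperBounds H), e < a • g := by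
  wlog hpos : 0 < a generalizing a e
  · rcases this (neg_ne_zero.2 ha) (-e) (by omega) with h | h
    · exact Or.inr (h.mono fun g hg => by simpa [neg_smul] using hg)
    · exact Or.inl (h.mono fun g hg => by simpa [neg_smul] using hg)
  obtain ⟨b₀, hb₀⟩ := upperBounds_nonempty_of_ne_top hconv hH'
  rcases exists_lt_smul_or_exists_smul_lt hG hconv hH hpos e with ⟨s, hs, hes⟩ | ⟨b, hb, hbe⟩
  · refine Or.inr ((eventually_mem_Ioo_cutFilter hs hb₀).mono fun g hg => ?_)
    exact hes.trans ((zsmul_lt_zsmul_iff_right hpos).2 hg.1)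
  · refine Or.inl ((eventually_mem_Ioo_cutFilter H.zero_mem hb).mono fun g hg => ?_)
    exact ((zsmul_lt_zsmul_iff_right hpos).2 hg.2).trans hbe

theorem not_eventuallyEq_isPeriodic (hH : H ≠ ⊥) (hH' : H ≠ ⊤) {P : Set G} (hP : IsPeriodic P) :
    ¬ (H : Set G) =ᶠ[cutFilter H (upperBounds H)] P := by
  intro hHP
  obtain ⟨c, hc, hc0⟩ := H.exists_pos_mem_of_ne_bot hH
  obtain ⟨⟨s₀, b₀⟩, ⟨hs₀, hb₀⟩, hsub⟩ :=
    (hasBasis_cutFilter ⟨0, H.zero_mem⟩ (upperBounds_nonempty_of_ne_top hconv hH')).eventually_iff.1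
      (eventuallyEq_set.1 hHP)
  have hx₀ : s₀ + c ∈ H := H.add_mem hs₀ hc
  have hx₀b₀ : s₀ + c < b₀ := (lt_add_of_pos_right _ hc0).trans_le (hb₀ (H.add_mem hx₀ hc))
  have hx₀P : s₀ + c ∈ P := (hsub ⟨lt_add_of_pos_right _ hc0, hx₀b₀⟩).1 hx₀
  obtain ⟨b₁, hb₁, hb₁b₀⟩ := exists_mem_upperBounds_lt hG hH hb₀
  obtain ⟨N, hN, hPN⟩ := hP
  obtain ⟨h, hh, hh'⟩ := hG N (by omega) (b₁ - (s₀ + c)) (b₀ - (s₀ + c)) (sub_lt_sub_right hb₁b₀ _)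
  rw [natCast_zsmul] at hh hh'
  have hy : s₀ + c + N • h ∈ Set.Ioo s₀ b₀ :=
    ⟨(lt_add_of_pos_right _ hc0).trans_le ((hb₁ hx₀).trans (sub_lt_iff_lt_add'.1 hh).le),
      lt_sub_iff_add_lt'.1 hh'⟩
  have hyH : s₀ + c + N • h ∈ H := (hsub hy).2 (hPN _ hx₀P h)
  exact (hb₁ hyH).not_gt (sub_lt_iff_lt_add'.1 hh)

theorem IsSemilinear.preimage_cons_ne (hH : H ≠ ⊥) (hH' : H ≠ ⊤) {n : ℕ}
    {X : Set (Fin (n + 1) → G)} (hX : IsSemilinear X) (p : Fin n → G) :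
    {g | Fin.cons g p ∈ X} ≠ H := by
  intro hXH
  obtain ⟨P, hP, hXP⟩ := hX.exists_isPeriodic_eventuallyEq_cons
    (fun _ ha e => eventually_smul_lt_or_eventually_lt_smul hG hconv hH hH' ha e) p
  exact not_eventuallyEq_isPeriodic hG hconv hH hH' hP (hXH ▸ hXP)

end ConvexSubgroup

theorem stmt_7_general {G : Type*} [AddCommGroup G] [LinearOrder G] [IsOrderedAddMonoid G]
    {D : Type*} [AddCommGroup D] [LinearOrder D] [IsOrderedAddMonoid D]
    (f : G →+ D) (hf : StrictMono f)
    (hdivD : ∀ (d : D) (n : ℕ), 0 < n → ∃ e : D, n • e = d)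
    (hdense : ∀ a b : D, a < b → ∃ g : G, a < f g ∧ f g < b)
    (k : ℕ) (φ : Log.Formula (Fin (k + 1))) (p : Fin k → G) :
    ∀ S : Set G, S = {x : G | φ.Realize (Fin.cons x p)} →
      ¬ ((0 : G) ∈ S ∧ (∀ a ∈ S, -a ∈ S) ∧ (∀ a ∈ S, ∀ b ∈ S, a + b ∈ S) ∧
         (∀ a b : G, b ∈ S → 0 ≤ a → a ≤ b → a ∈ S) ∧
         S ≠ {0} ∧ S ≠ Set.univ) := by
  rintro S rfl ⟨h0, hneg, hadd, hconv, hbot, htop⟩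
  let H : AddSubgroup G :=
    { carrier := {x | φ.Realize (Fin.cons x p)}
      zero_mem' := h0
      add_mem' := fun ha hb => hadd _ ha _ hb
      neg_mem' := fun ha => hneg _ ha }
  obtain ⟨x, -, hx⟩ :=
    Set.exists_of_ssubset (Set.singleton_subset_iff.2 h0 |>.ssubset_of_ne hbot.symm)
  have : Nontrivial G := ⟨⟨x, 0, hx⟩⟩
  have hG := zsmulDense_of_strictMono f hf hdivD hdense
  -- the free variables of `φ` become the coordinates of a tuple
  refine (isSemilinear_setOf_realize hG default
    (Language.BoundedFormula.relabel (Sum.inr : _ → Empty ⊕ _) φ)).preimage_cons_ne hG (H := H)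
    hconv (fun h => hbot ?_) (fun h => htop ?_) p ?_
  · exact congrArg SetLike.coe h
  · exact congrArg SetLike.coe h
  · ext g
    simp only [Set.mem_ofPred_eq, Language.BoundedFormula.realize_relabel]
    simp [Language.Formula.Realize, H, Subsingleton.elim (_ : Fin 0 → G) default]

/-- If `G` is a densely ordered abelian group that is dense in its divisible hull `D`
(modelled by a divisible ordered abelian group with an order-embedding `f : G →+ D` whose
image meets every positive multiple class), then no set defined, with parameters, by a
formula in the language of ordered groups is a proper nontrivial convex subgroup of `G`. -/
theorem stmt_7 {G : Type*} [AddCommGroup G] [LinearOrder G] [IsOrderedAddMonoid G] [DenselyOrdered G]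
    {D : Type*} [AddCommGroup D] [LinearOrder D] [IsOrderedAddMonoid D]
    (f : G →+ D) (hf : StrictMono f)
    (hdivD : ∀ (d : D) (n : ℕ), 0 < n → ∃ e : D, n • e = d)
    (hhull : ∀ d : D, ∃ (n : ℕ) (g : G), 0 < n ∧ n • d = f g)
    (hdense : ∀ a b : D, a < b → ∃ g : G, a < f g ∧ f g < b)
    (k : ℕ) (φ : Log.Formula (Fin (k + 1))) (p : Fin k → G) :
    ∀ S : Set G, S = {x : G | φ.Realize (Fin.cons x p)} →
      ¬ ((0 : G) ∈ S ∧ (∀ a ∈ S, -a ∈ S) ∧ (∀ a ∈ S, ∀ b ∈ S, a + b ∈ S) ∧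
         (∀ a b : G, b ∈ S → 0 ≤ a → a ≤ b → a ∈ S) ∧
         S ≠ {0} ∧ S ≠ Set.univ) :=
  stmt_7_general f hf hdivD hdense k φ p
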